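/- Let $\{X_t\}$ be a continuous Markov process on a metric space $M$ and $f$ a continuous real-valued function such that $\{f(X_t^x)\}_{t\ge 0}$ is a local submartingale for every starting point $x$. Under the same $L^p$-boundedness and exit-time decay hypotheses as in the harmonic case, $\mathbb{E}_x[f(X_t)] \ge f(x)$. -/

import Mathlib

/-!
Stop the process at `τ n ∧ t`, where `τ n` is the exit time of the closed ball `B(x, n)`.
Up to `τ n` the process `f (X ·)` is bounded by `K n = sup_{B(x, n)} |f|`, so optional sampling
for the localized submartingales, followed by dominated convergence along the localizing
sequence, gives `f x ≤ E[f (X (τ n ∧ t))]`. This differs from `E[f (X t)]` only on the event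
`{τ n ≤ t}`: there `f (X (τ n))` contributes at most
`K n P(τ n ≤ t) ≤ C P(τ n ≤ t) ^ (1 - 1 / p) → 0`, and `f (X t)`, being in `L^p ⊆ L^1`, has
vanishing integral over these shrinking events.
-/

open MeasureTheory Filter Set Topology
open scoped NNReal ENNReal

theorem Continuous.le_of_le_sInf_setOf_lt {g : ℝ≥0 → ℝ} (hg : Continuous g) {r : ℝ}
    (h0 : g 0 ≤ r) {u : ℝ≥0} (hu : u ≤ sInf {s | r < g s}) : g u ≤ r := by
  by_contra! hr
  have hu0 : 0 < u := pos_iff_ne_zero.2 (by rintro rfl; linarith)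
  obtain ⟨l, hlu, hl⟩ :=
    exists_Ioc_subset_of_mem_nhds ((isOpen_lt continuous_const hg).mem_nhds hr) ⟨0, hu0⟩
  obtain ⟨s, hls, hsu⟩ := exists_between hlu
  exact (hsu.trans_le hu).not_ge (csInf_le (OrderBot.bddBelow _) (hl ⟨hls, hsu.le⟩))

theorem IsCompact.le_biSup {M : Type*} [TopologicalSpace M] {s : Set M} (hs : IsCompact s)
    {g : M → ℝ} (hg : ContinuousOn g s) {y : M} (hy : y ∈ s) : g y ≤ ⨆ z ∈ s, g z := by
  refine le_ciSup₂ (f := fun z (_ : z ∈ s) => g z) ((hs.bddAbove_image hg).mono ?_) y hy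
  simp only [iUnion_subset_iff, range_subset_iff]
  exact fun z hz => mem_image_of_mem g hz

theorem abs_le_biSup_closedBall_of_le_sInf {M : Type*} [PseudoMetricSpace M] [ProperSpace M]
    {f : M → ℝ} (hf : Continuous f) {γ : ℝ≥0 → M} (hγ : Continuous γ) {x : M} (hγ0 : γ 0 = x)
    {r : ℝ} (hr : 0 ≤ r) {u : ℝ≥0} (hu : u ≤ sInf {s | r < dist x (γ s)}) :
    |f (γ u)| ≤ ⨆ y ∈ Metric.closedBall x r, |f y| := by
  refine (isCompact_closedBall x r).le_biSup (continuous_abs.comp hf).continuousOn ?_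
  rw [Metric.mem_closedBall, dist_comm]
  exact (continuous_const.dist hγ).le_of_le_sInf_setOf_lt (by simpa [hγ0] using hr) hu

namespace MeasureTheory

variable {Ω : Type*} {m0 : MeasurableSpace Ω} {μ : Measure Ω}

theorem integral_le_of_tendsto_of_nonneg {h : ℕ → Ω → ℝ} {H : Ω → ℝ} {B : ℝ}
    (h_nonneg : ∀ k, 0 ≤ᵐ[μ] h k) (h_int : ∀ k, Integrable (h k) μ)
    (h_lim : ∀ᵐ ω ∂μ, Tendsto (fun k => h k ω) atTop (𝓝 (H ω)))
    (h_le : ∀ k, ∫ ω, h k ω ∂μ ≤ B) :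
    ∫ ω, H ω ∂μ ≤ B := by
  have hB : 0 ≤ B := (integral_nonneg_of_ae (h_nonneg 0)).trans (h_le 0)
  have hH : 0 ≤ᵐ[μ] H := by
    filter_upwards [ae_all_iff.2 h_nonneg, h_lim] with ω hω hlim
    exact ge_of_tendsto' hlim hω
  have hlint : ∫⁻ ω, ENNReal.ofReal (H ω) ∂μ ≤ ENNReal.ofReal B :=
    calc ∫⁻ ω, ENNReal.ofReal (H ω) ∂μ
        = ∫⁻ ω, liminf (fun k => ENNReal.ofReal (h k ω)) atTop ∂μ := by
          refine lintegral_congr_ae ?_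
          filter_upwards [h_lim] with ω hω
          exact ((ENNReal.continuous_ofReal.tendsto _).comp hω).liminf_eq.symm
      _ ≤ liminf (fun k => ∫⁻ ω, ENNReal.ofReal (h k ω) ∂μ) atTop :=
          lintegral_liminf_le' fun k => (h_int k).aemeasurable.ennreal_ofReal
      _ ≤ ENNReal.ofReal B := by
          refine liminf_le_of_frequently_le' (Frequently.of_forall fun k => ?_)
          rw [← ofReal_integral_eq_lintegral_ofReal (h_int k) (h_nonneg k)]
          exact ENNReal.ofReal_le_ofReal (h_le k)
  have hH_meas : AEStronglyMeasurable H μ :=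
    aestronglyMeasurable_of_tendsto_ae atTop (fun k => (h_int k).1) h_lim
  rw [integral_eq_lintegral_of_nonneg_ae hH hH_meas]
  exact ENNReal.toReal_le_of_le_ofReal hB hlint

theorem le_integral_of_tendsto_of_uniform_tail [IsFiniteMeasure μ]
    {g : ℕ → Ω → ℝ} {G : Ω → ℝ} {a : ℝ}
    (hg : ∀ k, Integrable (g k) μ) (hG : Integrable G μ)
    (h_lim : ∀ᵐ ω ∂μ, Tendsto (fun k => g k ω) atTop (𝓝 (G ω)))
    (h_le : ∀ k, a ≤ ∫ ω, g k ω ∂μ)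
    (h_tail : ∀ ε > 0, ∃ c : ℝ, ∀ k, ∫ ω, max (g k ω - c) 0 ∂μ ≤ ε) :
    a ≤ ∫ ω, G ω ∂μ := by
  -- Truncating at `c` costs at most `ε`; the unbounded lower tails are handled by Fatou's lemma
  -- applied to `c - min (g k) c ≥ 0`.
  refine le_of_forall_pos_le_add fun ε hε => ?_
  obtain ⟨c, hc⟩ := h_tail ε hε
  have hmin_int : ∀ k, Integrable (fun ω => min (g k ω) c) μ :=
    fun k => (hg k).inf (integrable_const c)
  have hmin : ∀ k, a - ε ≤ ∫ ω, min (g k ω) c ∂μ := by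
    intro k
    have hsplit : ∫ ω, g k ω ∂μ = ∫ ω, min (g k ω) c ∂μ + ∫ ω, max (g k ω - c) 0 ∂μ := by
      have hpos : Integrable (fun ω => max (g k ω - c) 0) μ :=
        ((hg k).sub (integrable_const c)).pos_part
      rw [← integral_add (hmin_int k) hpos]
      congr 1 with ω
      rcases le_total (g k ω) c with h | h <;> simp [h]
    linarith [h_le k, hc k]
  have hfatou : ∫ ω, (c - min (G ω) c) ∂μ ≤ μ.real univ * c - (a - ε) := by
    refine integral_le_of_tendsto_of_nonneg (h := fun k ω => c - min (g k ω) c)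
      (fun k => ae_of_all _ fun ω => sub_nonneg.2 (min_le_right _ _))
      (fun k => (integrable_const c).sub (hmin_int k)) ?_ fun k => ?_
    · filter_upwards [h_lim] with ω hω
      exact tendsto_const_nhds.sub (hω.min tendsto_const_nhds)
    · rw [integral_sub (integrable_const c) (hmin_int k), integral_const, smul_eq_mul]
      linarith [hmin k]
  have hGmin_int : Integrable (fun ω => min (G ω) c) μ := hG.inf (integrable_const c)
  rw [integral_sub (integrable_const c) hGmin_int, integral_const, smul_eq_mul] at hfatou
  have := integral_mono hGmin_int hG fun ω => min_le_left (G ω) c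
  linarith

theorem Integrable.tendsto_integral_max_sub_atTop {g : Ω → ℝ} (hg : Integrable g μ) :
    Tendsto (fun c : ℝ => ∫ ω, max (g ω - c) 0 ∂μ) atTop (𝓝 0) := by
  have h := tendsto_integral_filter_of_dominated_convergence (μ := μ) (l := atTop)
    (F := fun (c : ℝ) ω => max (g ω - c) 0) (f := fun _ => 0) (fun ω => |g ω|)
    (Eventually.of_forall fun c =>
      (hg.1.sub aestronglyMeasurable_const).sup aestronglyMeasurable_const)
    ((eventually_ge_atTop 0).mono fun c hc => ae_of_all _ fun ω => by
      rw [Real.norm_eq_abs, abs_of_nonneg (le_max_right _ _)]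
      exact max_le (by linarith [le_abs_self (g ω)]) (abs_nonneg _))
    hg.abs
    (ae_of_all _ fun ω => tendsto_const_nhds.congr' <|
      (eventually_ge_atTop (g ω)).mono fun c hc => (max_eq_right (by linarith)).symm)
  simpa using h

noncomputable def dyadicCeil (k : ℕ) (s : ℝ≥0) : ℝ≥0 := ⌈s * 2 ^ k⌉₊ / 2 ^ k

theorem le_dyadicCeil (k : ℕ) (s : ℝ≥0) : s ≤ dyadicCeil k s := by
  rw [dyadicCeil, le_div_iff₀ (by positivity)]
  exact Nat.le_ceil _

theorem dyadicCeil_le (k : ℕ) (s : ℝ≥0) : dyadicCeil k s ≤ s + (2 ^ k)⁻¹ := by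
  rw [dyadicCeil, div_le_iff₀ (by positivity), add_mul, inv_mul_cancel₀ (by positivity)]
  exact (Nat.ceil_lt_add_one (by positivity)).le

@[simp]
theorem dyadicCeil_zero (k : ℕ) : dyadicCeil k 0 = 0 := by
  simp [dyadicCeil]

theorem tendsto_dyadicCeil (s : ℝ≥0) :
    Tendsto (fun k => dyadicCeil k s) atTop (𝓝[≥] s) := by
  refine tendsto_nhdsWithin_iff.2 ⟨?_, Eventually.of_forall fun k => le_dyadicCeil k s⟩
  have h : Tendsto (fun k : ℕ => s + (2 ^ k)⁻¹) atTop (𝓝 (s + 0)) :=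
    tendsto_const_nhds.add <| by
      simpa using NNReal.tendsto_pow_atTop_nhds_zero_of_lt_one (r := 2⁻¹) (by norm_num)
  rw [add_zero] at h
  exact tendsto_of_tendsto_of_tendsto_of_le_of_le tendsto_const_nhds h (le_dyadicCeil · s)
    (dyadicCeil_le · s)

noncomputable def Filtration.dyadic (ℱ : Filtration ℝ≥0 m0) (k : ℕ) : Filtration ℕ m0 where
  seq j := ℱ (j / 2 ^ k)
  mono' _ _ hij := ℱ.mono (by gcongr)
  le' _ := ℱ.le _

theorem IsStoppingTime.dyadicCeil {ℱ : Filtration ℝ≥0 m0} {ρ : Ω → ℝ≥0}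
    (hρ : IsStoppingTime ℱ fun ω => (ρ ω : WithTop ℝ≥0)) (k : ℕ) :
    IsStoppingTime (ℱ.dyadic k) fun ω => ((⌈ρ ω * 2 ^ k⌉₊ : ℕ) : WithTop ℕ) := by
  intro j
  have h (ω : Ω) : ((⌈ρ ω * 2 ^ k⌉₊ : ℕ) : WithTop ℕ) ≤ j ↔
      (ρ ω : WithTop ℝ≥0) ≤ ↑(j / 2 ^ k : ℝ≥0) := by
    rw [Nat.cast_le, WithTop.coe_le_coe, Nat.ceil_le, le_div_iff₀ (by positivity)]
  change MeasurableSet[ℱ (j / 2 ^ k)] {ω | ((⌈ρ ω * 2 ^ k⌉₊ : ℕ) : WithTop ℕ) ≤ j}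
  simp only [h]
  exact hρ _

variable {ℱ : Filtration ℝ≥0 m0} {Y : ℝ≥0 → Ω → ℝ}

theorem Submartingale.dyadic (hY : Submartingale Y ℱ μ) (k : ℕ) :
    Submartingale (fun j : ℕ => Y (j / 2 ^ k)) (ℱ.dyadic k) μ := by
  refine ⟨fun j => hY.1 (j / 2 ^ k), fun i j hij => hY.2.1 _ _ ?_, fun j => hY.2.2 (j / 2 ^ k)⟩
  gcongr

theorem stoppedValue_dyadic (Y : ℝ≥0 → Ω → ℝ) (ρ : Ω → ℝ≥0) (k : ℕ) :
    stoppedValue (fun j : ℕ => Y (j / 2 ^ k)) (fun ω => ((⌈ρ ω * 2 ^ k⌉₊ : ℕ) : WithTop ℕ)) =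
      fun ω => Y (dyadicCeil k (ρ ω)) ω := by
  funext ω
  rw [stoppedValue, Nat.cast_withTop]
  rfl

theorem Submartingale.integrable_dyadicCeil (hY : Submartingale Y ℱ μ) {ρ : Ω → ℝ≥0}
    (hρ : IsStoppingTime ℱ fun ω => (ρ ω : WithTop ℝ≥0)) {t : ℝ≥0} (hρt : ∀ ω, ρ ω ≤ t) (k : ℕ) :
    Integrable (fun ω => Y (dyadicCeil k (ρ ω)) ω) μ :=
  stoppedValue_dyadic Y ρ k ▸
    (hY.dyadic k).integrable_stoppedValue (hρ.dyadicCeil k) (N := ⌈t * 2 ^ k⌉₊)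
      fun ω => WithTop.coe_le_coe.2 (Nat.ceil_mono (by gcongr; exact hρt ω))

theorem Submartingale.integral_dyadicCeil_mono [IsFiniteMeasure μ] (hY : Submartingale Y ℱ μ)
    {ρ₁ ρ₂ : Ω → ℝ≥0} (hρ₁ : IsStoppingTime ℱ fun ω => (ρ₁ ω : WithTop ℝ≥0))
    (hρ₂ : IsStoppingTime ℱ fun ω => (ρ₂ ω : WithTop ℝ≥0)) (hle : ρ₁ ≤ ρ₂)
    {t : ℝ≥0} (hρ₂t : ∀ ω, ρ₂ ω ≤ t) (k : ℕ) :
    ∫ ω, Y (dyadicCeil k (ρ₁ ω)) ω ∂μ ≤ ∫ ω, Y (dyadicCeil k (ρ₂ ω)) ω ∂μ :=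
  stoppedValue_dyadic Y ρ₁ k ▸ stoppedValue_dyadic Y ρ₂ k ▸
    (hY.dyadic k).expected_stoppedValue_mono (hρ₁.dyadicCeil k) (hρ₂.dyadicCeil k)
    (fun ω => WithTop.coe_le_coe.2 (Nat.ceil_mono (by gcongr; exact hle ω))) (N := ⌈t * 2 ^ k⌉₊)
    fun ω => WithTop.coe_le_coe.2 (Nat.ceil_mono (by gcongr; exact hρ₂t ω))

/-- Discrete optional sampling at the dyadic upper approximations of `ρ` passes to the limit,
since the positive parts of these sampled values are uniformly controlled by the submartingale
`(Y - c)⁺` at time `t + 1`. -/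
theorem Submartingale.integral_zero_le_integral_of_continuousWithinAt [IsFiniteMeasure μ]
    (hY : Submartingale Y ℱ μ) (hYc : ∀ ω s, ContinuousWithinAt (fun s => Y s ω) (Ici s) s)
    {ρ : Ω → ℝ≥0} (hρ : IsStoppingTime ℱ fun ω => (ρ ω : WithTop ℝ≥0)) {t : ℝ≥0}
    (hρt : ∀ ω, ρ ω ≤ t) (hint : Integrable (fun ω => Y (ρ ω) ω) μ) :
    ∫ ω, Y 0 ω ∂μ ≤ ∫ ω, Y (ρ ω) ω ∂μ := by
  refine le_integral_of_tendsto_of_uniform_tail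
    (g := fun k ω => Y (dyadicCeil k (ρ ω)) ω) (hY.integrable_dyadicCeil hρ hρt) hint
    (ae_of_all _ fun ω => (hYc ω (ρ ω)).tendsto.comp (tendsto_dyadicCeil (ρ ω))) (fun k => ?_) ?_
  · simpa using
      hY.integral_dyadicCeil_mono (isStoppingTime_const ℱ 0) hρ (fun _ => zero_le) hρt k
  intro ε hε
  obtain ⟨c, hc⟩ :=
    ((hY.integrable (t + 1)).tendsto_integral_max_sub_atTop.eventually (ge_mem_nhds hε)).exists
  refine ⟨c, fun k => ?_⟩
  have hW : Submartingale (fun s ω => max (Y s ω - c) 0) ℱ μ := by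
    have h := (hY.sub_martingale (martingale_const ℱ μ c)).sup
      (martingale_zero (E := ℝ) ℱ μ).submartingale
    have h_eq : (Y - fun _ _ => c) ⊔ 0 = fun s ω => max (Y s ω - c) 0 := rfl
    rwa [h_eq] at h
  calc ∫ ω, max (Y (dyadicCeil k (ρ ω)) ω - c) 0 ∂μ
      ≤ ∫ ω, max (Y (dyadicCeil k t) ω - c) 0 ∂μ :=
        hW.integral_dyadicCeil_mono hρ (isStoppingTime_const ℱ t) hρt (fun _ => le_rfl) k
    _ ≤ ∫ ω, max (Y (t + 1) ω - c) 0 ∂μ := by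
        have hk : dyadicCeil k t ≤ t + 1 := (dyadicCeil_le k t).trans <| by
          gcongr
          exact inv_le_one_of_one_le₀ (one_le_pow₀ one_le_two)
        simpa using hW.setIntegral_le hk MeasurableSet.univ
    _ ≤ ε := hc

theorem integrable_and_integral_zero_le_of_localizing [IsFiniteMeasure μ] {Z : ℝ≥0 → Ω → ℝ}
    (hZc : ∀ ω, Continuous fun s => Z s ω) {σ : ℕ → Ω → ℝ≥0}
    (hσ : ∀ ω, Tendsto (fun n => σ n ω) atTop atTop)
    (hsub : ∀ n, Submartingale (stoppedProcess Z fun ω => (σ n ω : WithTop ℝ≥0)) ℱ μ)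
    {ρ : Ω → ℝ≥0} (hρ : IsStoppingTime ℱ fun ω => (ρ ω : WithTop ℝ≥0)) {t : ℝ≥0}
    (hρt : ∀ ω, ρ ω ≤ t) {K : ℝ} (hK : ∀ᵐ ω ∂μ, ∀ u ≤ ρ ω, |Z u ω| ≤ K) :
    Integrable (fun ω => Z (ρ ω) ω) μ ∧ ∫ ω, Z 0 ω ∂μ ≤ ∫ ω, Z (ρ ω) ω ∂μ := by
  have hstopped (n : ℕ) (s : ℝ≥0) (ω : Ω) :
      stoppedProcess Z (fun ω => (σ n ω : WithTop ℝ≥0)) s ω = Z (min s (σ n ω)) ω := by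
    rw [stoppedProcess, ← WithTop.coe_min]
    rfl
  have hcont (n : ℕ) (ω : Ω) :
      Continuous fun s => stoppedProcess Z (fun ω => (σ n ω : WithTop ℝ≥0)) s ω := by
    simp only [hstopped]
    exact (hZc ω).comp (continuous_id.min continuous_const)
  set G : ℕ → Ω → ℝ := fun n ω => Z (min (ρ ω) (σ n ω)) ω
  have hG_meas (n : ℕ) : AEStronglyMeasurable (G n) μ := by
    have h := stronglyMeasurable_stoppedValue_of_le
      ((hsub n).1.isStronglyProgressive_of_continuous (hcont n)) hρ
      fun ω => WithTop.coe_le_coe.2 (hρt ω)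
    exact (h.mono (ℱ.le t)).aestronglyMeasurable
  have hG_le : ∀ᵐ ω ∂μ, ∀ n, |G n ω| ≤ K := by
    filter_upwards [hK] with ω hω n using hω _ (min_le_left _ _)
  have hG_int (n : ℕ) : Integrable (G n) μ :=
    (integrable_const K).mono' (hG_meas n) (hG_le.mono fun ω h => h n)
  have hG_lim : ∀ ω, Tendsto (fun n => G n ω) atTop (𝓝 (Z (ρ ω) ω)) := fun ω =>
    tendsto_const_nhds.congr' <| ((hσ ω).eventually_ge_atTop (ρ ω)).mono fun n hn => by
      simp only [G, min_eq_left hn]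
  have hint : Integrable (fun ω => Z (ρ ω) ω) μ :=
    (integrable_const K).mono'
      (aestronglyMeasurable_of_tendsto_ae atTop hG_meas (ae_of_all _ hG_lim))
      (hK.mono fun ω h => h _ le_rfl)
  refine ⟨hint, le_of_tendsto_of_tendsto' tendsto_const_nhds
    (tendsto_integral_of_dominated_convergence (fun _ => K) hG_meas (integrable_const K)
      (fun n => hG_le.mono fun ω h => h n) (ae_of_all _ hG_lim)) fun n => ?_⟩
  have h := (hsub n).integral_zero_le_integral_of_continuousWithinAt
    (fun ω s => (hcont n ω).continuousWithinAt) hρ hρt (hG_int n)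
  simp only [hstopped] at h
  simpa [G] using h

theorem integrable_of_lintegral_rpow_lt_top [IsFiniteMeasure μ] {g : Ω → ℝ}
    (hg : AEStronglyMeasurable g μ) {p : ℝ} (hp : 1 ≤ p)
    (h : ∫⁻ ω, ENNReal.ofReal (|g ω| ^ p) ∂μ < ⊤) : Integrable g μ := by
  have hp0 : 0 < p := by linarith
  refine MemLp.integrable (q := ENNReal.ofReal p) (by simpa using hp) ⟨hg, ?_⟩
  rw [eLpNorm_lt_top_iff_lintegral_rpow_enorm_lt_top (by simpa using hp0) ENNReal.ofReal_ne_top,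
    ENNReal.toReal_ofReal hp0.le]
  simpa [Real.enorm_eq_ofReal_abs, ENNReal.ofReal_rpow_of_nonneg (abs_nonneg _) hp0.le] using h

theorem tendsto_setIntegral_of_abs_le_of_mul_rpow_le [IsFiniteMeasure μ] {E : ℕ → Set Ω}
    {G : ℕ → Ω → ℝ} {K : ℕ → ℝ} {p C : ℝ} (hp : 1 < p)
    (hE : Tendsto (fun n => μ (E n)) atTop (𝓝 0)) (hG : ∀ n, ∀ᵐ ω ∂μ, ω ∈ E n → |G n ω| ≤ K n)
    (hK : ∀ᶠ n in atTop, K n * (μ (E n)).toReal ^ (1 / p) ≤ C) :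
    Tendsto (fun n => ∫ ω in E n, G n ω ∂μ) atTop (𝓝 0) := by
  have hq : 0 < 1 - 1 / p := by
    rw [sub_pos, div_lt_one (by linarith)]
    exact hp
  have ha : Tendsto (fun n => (μ (E n)).toReal ^ (1 - 1 / p)) atTop (𝓝 0) := by
    have h := (ENNReal.tendsto_toReal ENNReal.zero_ne_top).comp hE
    rw [ENNReal.toReal_zero] at h
    have h' := h.rpow_const (p := 1 - 1 / p) (Or.inr hq.le)
    rwa [Real.zero_rpow hq.ne'] at h'
  refine squeeze_zero_norm' (a := fun n => C * (μ (E n)).toReal ^ (1 - 1 / p)) ?_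
    (by simpa using ha.const_mul C)
  filter_upwards [hK] with n hn
  have ha0 : 0 ≤ (μ (E n)).toReal := ENNReal.toReal_nonneg
  calc ‖∫ ω in E n, G n ω ∂μ‖ ≤ K n * (μ (E n)).toReal :=
        norm_setIntegral_le_of_norm_le_const_ae' (measure_lt_top μ _) (hG n)
    _ = K n * (μ (E n)).toReal ^ (1 / p) * (μ (E n)).toReal ^ (1 - 1 / p) := by
        rw [mul_assoc, ← Real.rpow_add' ha0 (by norm_num), add_sub_cancel, Real.rpow_one]
    _ ≤ C * (μ (E n)).toReal ^ (1 - 1 / p) := by gcongr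

theorem integral_eq_add_setIntegral_sub_of_eqOn_compl {F G : Ω → ℝ} {E : Set Ω}
    (hE : MeasurableSet E) (hF : Integrable F μ) (hG : Integrable G μ) (hFG : EqOn G F Eᶜ) :
    ∫ ω, G ω ∂μ = ∫ ω, F ω ∂μ + (∫ ω in E, G ω ∂μ - ∫ ω in E, F ω ∂μ) := by
  rw [← integral_add_compl hE hG, ← integral_add_compl hE hF, setIntegral_congr_fun hE.compl hFG]
  ring

end MeasureTheory

theorem stmt_13 {M : Type*} [MetricSpace M] [ProperSpace M]
    [MeasurableSpace M] [BorelSpace M]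
    {Ω : Type*} {m0 : MeasurableSpace Ω}
    (ℱ : Filtration NNReal m0)
    (P : M → Measure Ω) (hP : ∀ x, IsProbabilityMeasure (P x))
    (X : NNReal → Ω → M)
    (hXmeas : ∀ t, Measurable (X t))
    (hcont : ∀ ω, Continuous fun t => X t ω)
    (hstart : ∀ x : M, ∀ᵐ ω ∂P x, X 0 ω = x)
    (f : M → ℝ) (hf : Continuous f)
    -- {f(X_t^x)} is a local submartingale for every starting point x:
    (hlocmart : ∀ x : M, ∃ σ : ℕ → Ω → NNReal,
      (∀ n, IsStoppingTime ℱ (fun ω => (σ n ω : WithTop NNReal))) ∧ (∀ ω, Monotone fun n => σ n ω) ∧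
      (∀ ω, Tendsto (fun n => σ n ω) atTop atTop) ∧
      ∀ n, Submartingale
        (MeasureTheory.stoppedProcess (fun t ω => f (X t ω))
          (fun ω => (σ n ω : WithTop NNReal))) ℱ (P x))
    (x : M) (t : NNReal) (p : ℝ) (hp : 1 < p)
    (τ : ℕ → Ω → NNReal)
    -- τ n is the first exit time from the closed ball B(x,n):
    (hτdef : ∀ (n : ℕ) (ω : Ω), τ n ω = sInf {s : NNReal | (n : ℝ) < dist x (X s ω)})
    (hτstop : ∀ n, IsStoppingTime ℱ (fun ω => (τ n ω : WithTop NNReal)))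
    -- stochastic completeness:
    (hsc : Tendsto (fun n : ℕ => (P x) {ω | τ n ω ≤ t}) atTop (nhds 0))
    (hfp : ∫⁻ y, ENNReal.ofReal (|f y| ^ p) ∂((P x).map (X t)) < ⊤)
    (C : ℝ)
    (hbdd : ∀ n : ℕ, 0 < n →
      (⨆ y ∈ Metric.closedBall x n, |f y|) *
        ((P x) {ω | τ n ω ≤ t}).toReal ^ (1 / p) < C) :
    f x ≤ ∫ ω, f (X t ω) ∂(P x) := by
  have := hP x
  obtain ⟨σ, -, -, hσ, hσ_sub⟩ := hlocmart x
  set E : ℕ → Set Ω := fun n => {ω | τ n ω ≤ t}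
  set G : ℕ → Ω → ℝ := fun n ω => f (X (min (τ n ω) t) ω)
  have hE (n : ℕ) : MeasurableSet (E n) := by
    simpa only [WithTop.coe_le_coe] using ℱ.le t _ ((hτstop n).measurableSet_le t)
  have hball : ∀ᵐ ω ∂P x, ∀ (n : ℕ), ∀ u ≤ τ n ω,
      |f (X u ω)| ≤ ⨆ y ∈ Metric.closedBall x n, |f y| := by
    filter_upwards [hstart x] with ω hω n u hu
    exact abs_le_biSup_closedBall_of_le_sInf hf (hcont ω) hω n.cast_nonneg
      (hu.trans_eq (hτdef n ω))
  have hG (n : ℕ) := integrable_and_integral_zero_le_of_localizing (Z := fun s ω => f (X s ω))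
    (fun ω => hf.comp (hcont ω)) hσ hσ_sub ((hτstop n).min_const t) (fun ω => min_le_right _ _)
    (hball.mono fun ω h u hu => h n u (hu.trans (min_le_left _ _)))
  have h0 : ∫ ω, f (X 0 ω) ∂P x = f x := by
    rw [integral_congr_ae ((hstart x).mono fun ω h => congrArg f h)]
    simp
  have hF : Integrable (fun ω => f (X t ω)) (P x) :=
    (integrable_of_lintegral_rpow_lt_top hf.measurable.aestronglyMeasurable hp.le hfp)
      |>.comp_measurable (hXmeas t)
  have hGE : Tendsto (fun n => ∫ ω in E n, G n ω ∂P x) atTop (𝓝 0) :=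
    tendsto_setIntegral_of_abs_le_of_mul_rpow_le hp hsc
      (fun n => hball.mono fun ω h _ => h n _ (min_le_left _ _))
      ((eventually_gt_atTop 0).mono fun n hn => (hbdd n hn).le)
  refine ge_of_tendsto
    (by simpa using tendsto_const_nhds.add (hGE.sub (hF.tendsto_setIntegral_nhds_zero hsc)))
    (Eventually.of_forall fun n => ?_)
  rw [← integral_eq_add_setIntegral_sub_of_eqOn_compl (hE n) hF (hG n).1 fun ω hω =>
    congrArg (fun s => f (X s ω)) (min_eq_right (not_le.1 (show ¬τ n ω ≤ t from hω)).le), ← h0]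
  exact (hG n).2
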